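/- arXiv:2204.09142 — 7 statements merged into one kernel-verified Lean document; each statement's English description precedes it below -/
import Mathlib

section
/- Assume 0 < α ≤ 1 and that every finite subset C of M.E satisfies δ(C) ≥ 0. Let k ≥ 1 and let (B_i)_{i ∈ ℕ} be a family of k-element finite subsets of M.E. Then for every natural number n there exist a finite set Ω ⊆ ℕ with |Ω| ≥ n and a finite set A such that: (1) for each i ∈ Ω, A ⊆ B_i and δ(C) ≥ δ(A) for every C with A ⊆ C ⊆ B_i (i.e. A is closed in B_i); and (2) B_i ∩ B_j = A for all distinct i, j ∈ Ω. -/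
/-!
An infinite family of sets of bounded size contains an infinite Δ-system (sunflower) with some
kernel `A`. Only finitely many of its members `B i` can fail to contain `A` as a closed subset:
the witnesses `A ⊆ C i ⊆ B i` with `δ(C i) < δ(A)` have predimensions in a finite set, so
infinitely many share one value `d < δ(A)`. These witnesses meet pairwise in `A`, so
submodularity of `δ` gives `δ(A ∪ C i₁ ∪ ⋯ ∪ C iₘ) ≤ δ(A) - m (δ(A) - d)`, which is negative for
large `m`, contradicting `δ ≥ 0`.
-/

open Set

/-- The rank of a (finite) set in a matroid: the supremum of cardinalities of independent
subsets. -/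
noncomputable def mRk {V : Type*} (M : Matroid V) (A : Set V) : ℕ :=
  sSup {n : ℕ | ∃ I : Set V, M.Indep I ∧ I ⊆ A ∧ I.ncard = n}

/-- The predimension `δ(A) = r(A) - α·|A ∩ P|` of a finite set `A`, where `P` is the set of
colored elements. -/
noncomputable def mDelta {V : Type*} (M : Matroid V) (P : Set V) (α : ℝ) (A : Set V) : ℝ :=
  (mRk M A : ℝ) - α * ((A ∩ P).ncard : ℝ)

section Combinatorics

variable {ι α : Type*}

theorem Set.Infinite.exists_infinite_inter_preimage_singleton {s : Set ι}
    {t : Set α} {f : ι → α} (hs : s.Infinite) (hf : MapsTo f s t) (ht : t.Finite) :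
    ∃ y ∈ t, (s ∩ f ⁻¹' {y}).Infinite := by
  by_contra! h
  exact hs ((ht.biUnion h).subset fun x hx => mem_biUnion (hf hx) ⟨hx, rfl⟩)

theorem Set.Infinite.exists_infinite_pairwiseDisjoint {S : Set ι} (hS : S.Infinite)
    (B : ι → Set α) (hB : ∀ i ∈ S, (B i).Finite) (hfib : ∀ x, {i ∈ S | x ∈ B i}.Finite) :
    ∃ T ⊆ S, T.Infinite ∧ T.PairwiseDisjoint B := by
  obtain ⟨T, ⟨hTS, hTB⟩, hTmax⟩ := zorn_subset {T | T ⊆ S ∧ T.PairwiseDisjoint B}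
    fun c hc hchain => ⟨⋃₀ c, ⟨sUnion_subset fun T hT => (hc hT).1,
      (hchain.pairwiseDisjoint_sUnion B).2 fun T hT => (hc hT).2⟩, fun _ => subset_sUnion_of_mem⟩
  refine ⟨T, hTS, fun hTfin => ?_, hTB⟩
  -- An index outside the finitely many that meet some `B j`, `j ∈ T`, could be added to `T`.
  have hmeet : (T ∪ ⋃ j ∈ T, ⋃ x ∈ B j, {i ∈ S | x ∈ B i}).Finite :=
    hTfin.union <| hTfin.biUnion fun j hj => (hB j (hTS hj)).biUnion fun x _ => hfib x
  obtain ⟨i, hiS, hi⟩ := hS.exists_notMem_finite hmeet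
  have hdisj : ∀ j ∈ T, i ≠ j → Disjoint (B i) (B j) := fun j hj _ =>
    Set.disjoint_left.2 fun x hxi hxj =>
      hi (Or.inr (mem_biUnion hj (mem_biUnion hxj ⟨hiS, hxi⟩)))
  exact hi (Or.inl (hTmax ⟨insert_subset hiS hTS, hTB.insert hdisj⟩ (subset_insert i T)
    (mem_insert i T)))

theorem Set.Infinite.exists_infinite_sunflower {S : Set ι} (hS : S.Infinite) (B : ι → Set α)
    {k : ℕ} (hB : ∀ i ∈ S, (B i).encard ≤ k) :
    ∃ T ⊆ S, T.Infinite ∧ ∃ A, (∀ i ∈ T, A ⊆ B i) ∧ T.Pairwise fun i j => B i ∩ B j = A := by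
  induction k generalizing B S with
  | zero =>
    have hB' : ∀ i ∈ S, B i = ∅ := fun i hi => encard_eq_zero.1 (nonpos_iff_eq_zero.1 (hB i hi))
    exact ⟨S, subset_rfl, hS, ∅, fun i hi => (hB' i hi).ge,
      fun i hi j _ _ => show B i ∩ B j = ∅ by rw [hB' i hi, empty_inter]⟩
  | succ k ih =>
    by_cases hx : ∃ x, {i ∈ S | x ∈ B i}.Infinite
    · obtain ⟨x, hxS⟩ := hx
      have hBx : ∀ i ∈ {i ∈ S | x ∈ B i}, (B i \ {x}).encard ≤ k := fun i hi => by
        rw [encard_sdiff_singleton_of_mem hi.2, tsub_le_iff_right]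
        exact_mod_cast hB i hi.1
      obtain ⟨T, hTS, hT, A, hAB, hTA⟩ := ih hxS (fun i => B i \ {x}) hBx
      refine ⟨T, fun i hi => (hTS hi).1, hT, insert x A,
        fun i hi => insert_subset (hTS hi).2 ((hAB i hi).trans sdiff_subset),
        fun i hi j hj hij => ?_⟩
      change B i ∩ B j = _
      rw [← hTA hi hj hij, ← sdiff_inter_distrib_right, insert_sdiff_singleton,
        insert_eq_of_mem (mem_inter (hTS hi).2 (hTS hj).2)]
    · push Not at hx
      obtain ⟨T, hTS, hT, hTB⟩ := hS.exists_infinite_pairwiseDisjoint B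
        (fun i hi => finite_of_encard_le_coe (hB i hi)) hx
      exact ⟨T, hTS, hT, ∅, fun _ _ => empty_subset _,
        fun i hi j hj hij => disjoint_iff_inter_eq_empty.1 (hTB hi hj hij)⟩

end Combinatorics

section Predimension

variable {V : Type*} {M : Matroid V} {P : Set V} {α : ℝ}

theorem cast_mRk_eq_eRk {X : Set V} (hX : X.Finite) : (mRk M X : ℕ∞) = M.eRk X := by
  obtain ⟨I, hI⟩ := M.exists_isBasis' X
  have hIfin : I.Finite := hX.subset hI.subset
  have hmax : IsGreatest {n : ℕ | ∃ J : Set V, M.Indep J ∧ J ⊆ X ∧ J.ncard = n} I.ncard := by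
    refine ⟨⟨I, hI.indep, hI.subset, rfl⟩, ?_⟩
    rintro _ ⟨J, hJ, hJX, rfl⟩
    have hle := hJ.encard_le_eRk_of_subset hJX
    rw [← hI.encard_eq_eRk, ← (hX.subset hJX).cast_ncard_eq, ← hIfin.cast_ncard_eq] at hle
    exact_mod_cast hle
  rw [mRk, hmax.csSup_eq, hIfin.cast_ncard_eq, hI.encard_eq_eRk]

theorem mRk_le_ncard {X : Set V} (hX : X.Finite) : mRk M X ≤ X.ncard := by
  have h := M.eRk_le_encard X
  rw [← cast_mRk_eq_eRk hX, ← hX.cast_ncard_eq] at h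
  exact_mod_cast h

theorem mRk_inter_add_mRk_union_le {X Y : Set V} (hX : X.Finite) (hY : Y.Finite) :
    mRk M (X ∩ Y) + mRk M (X ∪ Y) ≤ mRk M X + mRk M Y := by
  have h := M.eRk_inter_add_eRk_union_le X Y
  rw [← cast_mRk_eq_eRk hX, ← cast_mRk_eq_eRk hY, ← cast_mRk_eq_eRk (hX.inter_of_left Y),
    ← cast_mRk_eq_eRk (hX.union hY)] at h
  exact_mod_cast h

theorem mDelta_inter_add_mDelta_union_le {X Y : Set V} (hX : X.Finite) (hY : Y.Finite) :
    mDelta M P α (X ∩ Y) + mDelta M P α (X ∪ Y) ≤ mDelta M P α X + mDelta M P α Y := by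
  have hrk : (mRk M (X ∩ Y) : ℝ) + mRk M (X ∪ Y) ≤ mRk M X + mRk M Y := by
    exact_mod_cast mRk_inter_add_mRk_union_le hX hY
  have hcol : ((X ∩ Y ∩ P).ncard : ℝ) + ((X ∪ Y) ∩ P).ncard = (X ∩ P).ncard + (Y ∩ P).ncard := by
    rw [inter_inter_distrib_right, union_inter_distrib_right, add_comm]
    exact_mod_cast ncard_union_add_ncard_inter _ _ (hX.inter_of_left P) (hY.inter_of_left P)
  simp only [mDelta]
  linear_combination hrk - α * hcol

theorem finite_image_mDelta_setOf_encard_le (M : Matroid V) (P : Set V) (α : ℝ) (k : ℕ) :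
    (mDelta M P α '' {C | C.encard ≤ k}).Finite := by
  refine ((finite_Iic k).prod (finite_Iic k)).image (fun p : ℕ × ℕ => (p.1 : ℝ) - α * p.2)
    |>.subset ?_
  rintro _ ⟨C, hC : C.encard ≤ k, rfl⟩
  have hCfin : C.Finite := finite_of_encard_le_coe hC
  have hCk : C.ncard ≤ k := by rwa [← hCfin.cast_ncard_eq, Nat.cast_le] at hC
  exact ⟨(mRk M C, (C ∩ P).ncard),
    ⟨(mRk_le_ncard hCfin).trans hCk, (ncard_le_ncard inter_subset_left hCfin).trans hCk⟩, rfl⟩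

theorem mDelta_union_biUnion_le {ι : Type*} (J : Finset ι) {A : Set V} (C : ι → Set V)
    (hA : A.Finite) (hC : ∀ i ∈ J, (C i).Finite) (hAC : ∀ i ∈ J, A ⊆ C i)
    (hCC : (J : Set ι).Pairwise fun i j => C i ∩ C j ⊆ A) :
    mDelta M P α (A ∪ ⋃ i ∈ J, C i) ≤
      mDelta M P α A + ∑ i ∈ J, (mDelta M P α (C i) - mDelta M P α A) := by
  classical
  induction J using Finset.induction_on with
  | empty => simp
  | insert a J haJ ih =>
    simp only [Finset.mem_insert, forall_eq_or_imp] at hC hAC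
    rw [Finset.coe_insert] at hCC
    set U := A ∪ ⋃ i ∈ J, C i
    have hU : U.Finite := hA.union (J.finite_toSet.biUnion hC.2)
    have hunion : A ∪ ⋃ i ∈ insert a J, C i = C a ∪ U := by
      rw [Finset.set_biUnion_insert, union_left_comm]
    have hinter : C a ∩ U = A := by
      refine subset_antisymm ?_ (subset_inter hAC.1 subset_union_left)
      rintro x ⟨hxa, hxA | hxJ⟩
      · exact hxA
      · obtain ⟨i, hi, hxi⟩ := mem_iUnion₂.1 hxJ
        exact hCC (mem_insert a _) (mem_insert_of_mem a hi) (ne_of_mem_of_not_mem hi haJ).symm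
          ⟨hxa, hxi⟩
    have hsub := mDelta_inter_add_mDelta_union_le (M := M) (P := P) (α := α) hC.1 hU
    have hJ := ih hC.2 hAC.2 (hCC.mono (subset_insert a _))
    rw [hinter] at hsub
    rw [hunion, Finset.sum_insert haJ]
    linarith

def IsClosedIn (M : Matroid V) (P : Set V) (α : ℝ) (A B : Set V) : Prop :=
  A ⊆ B ∧ ∀ C : Set V, A ⊆ C → C ⊆ B → mDelta M P α A ≤ mDelta M P α C

theorem finite_setOf_not_isClosedIn {ι : Type*}
    (hK : ∀ C : Set V, C ⊆ M.E → C.Finite → 0 ≤ mDelta M P α C) {A : Set V} {k : ℕ}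
    (B : ι → Set V) {T : Set ι} (hBE : ∀ i ∈ T, B i ⊆ M.E) (hBk : ∀ i ∈ T, (B i).encard ≤ k)
    (hAB : ∀ i ∈ T, A ⊆ B i) (hTA : T.Pairwise fun i j => B i ∩ B j = A) :
    {i ∈ T | ¬ IsClosedIn M P α A (B i)}.Finite := by
  refine not_infinite.1 fun hinf => ?_
  have hC : ∀ i ∈ {i ∈ T | ¬ IsClosedIn M P α A (B i)},
      ∃ C, A ⊆ C ∧ C ⊆ B i ∧ mDelta M P α C < mDelta M P α A := fun i hi => by
    simpa [IsClosedIn, hAB i hi.1] using hi.2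
  choose! C hAC hCB hCA using hC
  have hmaps : MapsTo (fun i => mDelta M P α (C i)) {i ∈ T | ¬ IsClosedIn M P α A (B i)}
      (mDelta M P α '' {C | C.encard ≤ k}) :=
    fun i hi => ⟨C i, (encard_le_encard (hCB i hi)).trans (hBk i hi.1), rfl⟩
  obtain ⟨d, -, hd⟩ := hinf.exists_infinite_inter_preimage_singleton hmaps
    (finite_image_mDelta_setOf_encard_le M P α k)
  obtain ⟨i₀, hi₀, hd₀ : mDelta M P α (C i₀) = d⟩ := hd.nonempty
  have hdA : d < mDelta M P α A := hd₀ ▸ hCA i₀ hi₀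
  obtain ⟨m, hm⟩ := exists_lt_nsmul (sub_pos.2 hdA) (mDelta M P α A)
  obtain ⟨J, hJ, rfl⟩ := hd.exists_subset_card_eq m
  have hbad : ∀ i ∈ J, i ∈ T ∧ ¬ IsClosedIn M P α A (B i) := fun i hi => (hJ hi).1
  have hBfin : ∀ i ∈ J, (B i).Finite := fun i hi => finite_of_encard_le_coe (hBk i (hbad i hi).1)
  have hAfin : A.Finite := (finite_of_encard_le_coe (hBk i₀ hi₀.1)).subset (hAB i₀ hi₀.1)
  have hsum : ∑ i ∈ J, (mDelta M P α (C i) - mDelta M P α A) = J.card • (d - mDelta M P α A) :=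
    Finset.sum_eq_card_nsmul fun i hi => by rw [show mDelta M P α (C i) = d from (hJ hi).2]
  have hle := mDelta_union_biUnion_le (M := M) (P := P) (α := α) J C hAfin
    (fun i hi => (hBfin i hi).subset (hCB i (hbad i hi)))
    (fun i hi => hAC i (hbad i hi))
    (fun i hi j hj hij => (inter_subset_inter (hCB i (hbad i hi)) (hCB j (hbad j hj))).trans
      (hTA (hbad i hi).1 (hbad j hj).1 hij).le)
  have hnonneg := hK (A ∪ ⋃ i ∈ J, C i)
    (union_subset ((hAB i₀ hi₀.1).trans (hBE i₀ hi₀.1))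
      (iUnion₂_subset fun i hi => (hCB i (hbad i hi)).trans (hBE i (hbad i hi).1)))
    (hAfin.union (J.finite_toSet.biUnion fun i hi => (hBfin i hi).subset (hCB i (hbad i hi))))
  rw [nsmul_eq_mul] at hm hsum
  linarith

end Predimension

theorem bicolored_delta_system_general {V : Type*} (M : Matroid V) (P : Set V) (α : ℝ)
    (hK : ∀ C : Set V, C ⊆ M.E → C.Finite → 0 ≤ mDelta M P α C)
    (k : ℕ) (B : ℕ → Set V)
    (hBE : ∀ i, B i ⊆ M.E) (hBfin : ∀ i, (B i).Finite) (hBcard : ∀ i, (B i).ncard = k)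
    (n : ℕ) :
    ∃ (Ω : Set ℕ) (A : Set V), Ω.Finite ∧ n ≤ Ω.ncard ∧ A.Finite ∧
      (∀ i ∈ Ω, A ⊆ B i ∧
        ∀ C : Set V, A ⊆ C → C ⊆ B i → mDelta M P α A ≤ mDelta M P α C) ∧
      (∀ i ∈ Ω, ∀ j ∈ Ω, i ≠ j → B i ∩ B j = A) := by
  have hBk : ∀ i, (B i).encard ≤ k := fun i => by rw [← (hBfin i).cast_ncard_eq, hBcard i]
  obtain ⟨T, -, hT, A, hAB, hTA⟩ := infinite_univ.exists_infinite_sunflower B fun i _ => hBk i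
  have hclosed := finite_setOf_not_isClosedIn hK B (fun i _ => hBE i) (fun i _ => hBk i) hAB hTA
  obtain ⟨Ω, hΩ, rfl⟩ := (hT.sdiff hclosed).exists_subset_card_eq n
  obtain ⟨i₀, hi₀⟩ := hT.nonempty
  refine ⟨Ω, A, Ω.finite_toSet, (ncard_coe_finset Ω).ge, (hBfin i₀).subset (hAB i₀ hi₀),
    fun i hi => not_not.1 fun h => (hΩ hi).2 ⟨(hΩ hi).1, h⟩,
    fun i hi j hj hij => hTA (hΩ hi).1 (hΩ hj).1 hij⟩

/-- Δ-system lemma with closed root: if `0 < α ≤ 1`, every finite subset of the ground set has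
nonnegative predimension, and `(B i)` is a family of `k`-element subsets of the ground set
(`k ≥ 1`), then for every `n` there are a finite `Ω ⊆ ℕ` with `|Ω| ≥ n` and a finite set `A`
such that `A` is closed in each `B i` (`i ∈ Ω`) and `B i ∩ B j = A` for distinct `i, j ∈ Ω`. -/
theorem bicolored_delta_system {V : Type*} (M : Matroid V) (P : Set V) (α : ℝ)
    (hα0 : 0 < α) (hα1 : α ≤ 1)
    (hK : ∀ C : Set V, C ⊆ M.E → C.Finite → 0 ≤ mDelta M P α C)
    (k : ℕ) (hk : 1 ≤ k) (B : ℕ → Set V)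
    (hBE : ∀ i, B i ⊆ M.E) (hBfin : ∀ i, (B i).Finite) (hBcard : ∀ i, (B i).ncard = k)
    (n : ℕ) :
    ∃ (Ω : Set ℕ) (A : Set V), Ω.Finite ∧ n ≤ Ω.ncard ∧ A.Finite ∧
      (∀ i ∈ Ω, A ⊆ B i ∧
        ∀ C : Set V, A ⊆ C → C ⊆ B i → mDelta M P α A ≤ mDelta M P α C) ∧
      (∀ i ∈ Ω, ∀ j ∈ Ω, i ≠ j → B i ∩ B j = A) :=
  bicolored_delta_system_general M P α hK k B hBE hBfin hBcard n
end

section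
/- Let α be an irrational real number with 0 < α < 1 and let ε be a real number with 0 < ε < α. Then there exist natural numbers s, k with 1 ≤ s < k such that −ε < s − α·k < 0 (equivalently s/k < α < (s + ε)/k), and moreover min(l, s) − α·l > 0 for every natural number l with 1 ≤ l < k. -/
/-- If `α·k - j ∈ (0, ε)` for some integer `j` and `ε < 1`, then `Int.fract (α·k) ∈ (0, ε)`. -/
private lemma fract_mem_of_sub_int {α ε : ℝ} (hε1 : ε < 1) (k : ℕ) (j : ℤ)
    (h0 : 0 < α * k - j) (h1 : α * k - j < ε) :
    0 < Int.fract (α * k) ∧ Int.fract (α * k) < ε := by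
  have : Int.fract (α * k) = α * k - j := by
    rw [← Int.fract_sub_intCast (α * k) j, Int.fract_eq_self]
    exact ⟨h0.le, h1.trans hε1⟩
  rw [this]
  exact ⟨h0, h1⟩

/-- Key step: there is `k ≥ 1` with `0 < Int.fract (α·k) < ε`. -/
private lemma exists_fract_small (α : ℝ) (hirr : Irrational α) (h0 : 0 < α) (h1 : α < 1)
    {ε : ℝ} (hε0 : 0 < ε) (hεα : ε < α) :
    ∃ k : ℕ, 1 ≤ k ∧ 0 < Int.fract (α * k) ∧ Int.fract (α * k) < ε := by
  have hε1 : ε < 1 := hεα.trans h1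
  obtain ⟨n, hn⟩ := exists_nat_gt (1 / ε)
  have hn0 : 0 < n := by
    rcases Nat.eq_zero_or_pos n with h | h
    · subst h; simp only [Nat.cast_zero] at hn
      exact absurd hn (not_lt.2 (by positivity))
    · exact h
  obtain ⟨q, hq0, hqn, hq⟩ := Real.exists_nat_abs_mul_sub_round_le α hn0
  set m : ℤ := round ((q : ℝ) * α) with hm
  have hlt : |(q : ℝ) * α - m| < ε := by
    refine hq.trans_lt ?_
    rw [div_lt_iff₀ (by positivity)]
    rw [div_lt_iff₀ hε0] at hn
    nlinarith
  have hne : (q : ℝ) * α - m ≠ 0 := by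
    intro h
    have : Irrational ((q : ℝ) * α) := hirr.natCast_mul hq0.ne'
    exact this.ne_int m (by linarith)
  rcases hne.lt_or_gt with hneg | hpos
  · -- approximation from above: t := m - qα ∈ (0, ε)
    set t : ℝ := (m : ℝ) - q * α with ht
    have ht0 : 0 < t := by simp only [ht]; linarith
    have htε : t < ε := by
      have := abs_lt.mp hlt
      simp only [ht]; linarith
    set N : ℤ := ⌊α / t⌋ with hN
    have hN1 : 1 ≤ N := by
      rw [hN, Int.le_floor]
      push_cast
      rw [le_div_iff₀ ht0]
      linarith
    have hNt : (N : ℝ) * t ≤ α := by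
      rw [hN]
      have := Int.floor_le (α / t)
      calc (⌊α / t⌋ : ℝ) * t ≤ (α / t) * t := by nlinarith
        _ = α := div_mul_cancel₀ α ht0.ne'
    have hNt2 : α - (N : ℝ) * t < t := by
      have := Int.lt_floor_add_one (α / t)
      have h2 : α / t < N + 1 := by rw [hN]; exact_mod_cast this
      rw [div_lt_iff₀ ht0] at h2
      nlinarith
    -- y := α - N t = (1 + N q) α - N m
    set k : ℕ := 1 + N.toNat * q with hk
    have hNcast : ((N.toNat : ℤ) : ℝ) = (N : ℝ) := by
      rw [Int.toNat_of_nonneg (by linarith)]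
    have hNcast' : ((N.toNat : ℕ) : ℝ) = (N : ℝ) := by
      exact_mod_cast Int.toNat_of_nonneg (show (0:ℤ) ≤ N by linarith)
    have hkcast : (k : ℝ) = 1 + (N : ℝ) * q := by
      rw [hk]
      push_cast
      rw [hNcast']
    have key : α * k - (N * m : ℤ) = α - (N : ℝ) * t := by
      rw [hkcast]
      push_cast
      simp only [ht]
      ring
    have hy0 : 0 < α * k - (N * m : ℤ) := by
      rw [key]
      rcases lt_or_eq_of_le hNt with h | h
      · linarith
      · exfalso
        have : Irrational ((k : ℝ) * α) := hirr.natCast_mul (by simp [hk])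
        refine this.ne_int (N * m) ?_
        rw [mul_comm]
        have : α * k - (N * m : ℤ) = 0 := by rw [key]; linarith
        linarith
    have hy1 : α * k - (N * m : ℤ) < ε := by rw [key]; linarith
    obtain ⟨hA, hB⟩ := fract_mem_of_sub_int hε1 k (N * m) hy0 hy1
    exact ⟨k, by simp [hk], hA, hB⟩
  · -- approximation from below: qα - m ∈ (0, ε)
    have hlt' : α * q - m < ε := by
      have := abs_lt.mp hlt
      linarith [this.2]
    obtain ⟨hA, hB⟩ := fract_mem_of_sub_int hε1 q m (by linarith [hpos, mul_comm (q:ℝ) α]) hlt'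
    exact ⟨q, hq0, hA, hB⟩

/-- Numerical core of Lemma 3.11: for irrational `0 < α < 1` and `0 < ε < α` there are natural
numbers `1 ≤ s < k` with `-ε < s - α·k < 0`, and `min(l, s) - α·l > 0` for every natural
number `l` with `1 ≤ l < k`. -/
theorem bicolored_irrational_approx (α : ℝ) (hirr : Irrational α)
    (h0 : 0 < α) (h1 : α < 1) (ε : ℝ) (hε0 : 0 < ε) (hεα : ε < α) :
    ∃ s k : ℕ, 1 ≤ s ∧ s < k ∧
      -ε < (s : ℝ) - α * (k : ℝ) ∧ (s : ℝ) - α * (k : ℝ) < 0 ∧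
      ∀ l : ℕ, 1 ≤ l → l < k → 0 < ((min l s : ℕ) : ℝ) - α * (l : ℝ) := by
  obtain ⟨k, hk1, hf0, hfε⟩ := exists_fract_small α hirr h0 h1 hε0 hεα
  set f : ℝ := Int.fract (α * k) with hf
  set s : ℕ := ⌊α * k⌋.toNat with hs
  have hαk0 : 0 ≤ α * k := by positivity
  have hcast : ((⌊α * k⌋.toNat : ℕ) : ℝ) = (⌊α * k⌋ : ℝ) := by
    exact_mod_cast Int.toNat_of_nonneg (Int.floor_nonneg.2 hαk0)
  have hsr : (s : ℝ) = α * k - f := by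
    rw [hs, hcast, hf]
    have := Int.self_sub_fract (α * k)
    linarith
  have hαk1 : α ≤ α * k := le_mul_of_one_le_right h0.le (by exact_mod_cast hk1)
  have hs1 : 1 ≤ s := by
    by_contra h
    push_neg at h
    interval_cases s
    simp only [Nat.cast_zero] at hsr
    linarith
  have hkr : (1 : ℝ) ≤ (k : ℝ) := by exact_mod_cast hk1
  have hsk : s < k := by
    have : (s : ℝ) < (k : ℝ) := by nlinarith
    exact_mod_cast this
  refine ⟨s, k, hs1, hsk, by rw [hsr]; linarith, by rw [hsr]; linarith, ?_⟩
  intro l hl1 hlk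
  have hlr1 : (1 : ℝ) ≤ (l : ℝ) := by exact_mod_cast hl1
  rcases le_or_gt l s with h | h
  · rw [min_eq_left h]
    nlinarith
  · rw [min_eq_right h.le]
    have hlk' : (l : ℝ) ≤ (k : ℝ) - 1 := by
      have : l + 1 ≤ k := hlk
      have := (Nat.cast_le (α := ℝ)).2 this
      push_cast at this
      linarith
    nlinarith
end

section
/- Assume α > 0. Let A be a finite subset of M.E and let C be a finite subset of (M.closure A ∩ P) \ A such that δ(A ∪ C) ≥ 0. Then α·|C| ≤ δ(A); in particular, since δ(A) ≤ |A|, one has |C| ≤ |A|/α. -/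
open Set

/-!
The colored elements `C` lie in the closure of `A`, so adding them does not change the rank,
while each of them lowers the predimension by `α`: `0 ≤ δ(A ∪ C) = δ(A) - α|C|`.
The second bound follows from `δ(A) ≤ r(A) ≤ |A|`.
-/

section

variable {V : Type*} {M : Matroid V} {P A C : Set V} {α : ℝ}

lemma cast_mRk_eq_eRk_s7 (hA : M.IsRkFinite A) : (mRk M A : ℕ∞) = M.eRk A := by
  obtain ⟨I, hI, hIfin⟩ := hA.exists_finite_isBasis'
  have hgreatest :
      IsGreatest {n : ℕ | ∃ I : Set V, M.Indep I ∧ I ⊆ A ∧ I.ncard = n} I.ncard := by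
    refine ⟨⟨I, hI.indep, hI.subset, rfl⟩, ?_⟩
    rintro _ ⟨J, hJ, hJA, rfl⟩
    have hJfin : J.Finite := hA.finite_of_indep_subset hJ hJA
    have hle : J.encard ≤ I.encard := hI.encard_eq_eRk ▸ hJ.encard_le_eRk_of_subset hJA
    rwa [← hJfin.cast_ncard_eq, ← hIfin.cast_ncard_eq, Nat.cast_le] at hle
  rw [mRk, hgreatest.csSup_eq, hIfin.cast_ncard_eq, hI.encard_eq_eRk]

lemma mRk_le_ncard_s7 (hA : A.Finite) : mRk M A ≤ A.ncard := by
  have h := M.eRk_le_encard A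
  rwa [← cast_mRk_eq_eRk_s7 (M.isRkFinite_of_finite hA), ← hA.cast_ncard_eq, Nat.cast_le] at h

lemma mRk_union_eq_of_subset_closure (hA : M.IsRkFinite A) (hC : C ⊆ M.closure A) :
    mRk M (A ∪ C) = mRk M A := by
  have heRk : M.eRk (A ∪ C) = M.eRk A := by
    refine le_antisymm ?_ (M.eRk_mono subset_union_left)
    calc M.eRk (A ∪ C) ≤ M.eRk (A ∪ M.closure A) := M.eRk_mono (union_subset_union_right A hC)
      _ = M.eRk A := by rw [M.eRk_union_closure_right_eq, union_self]
  have hAC : M.IsRkFinite (A ∪ C) := hA.union (hA.closure.subset hC)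
  exact_mod_cast (cast_mRk_eq_eRk_s7 hAC).trans (heRk.trans (cast_mRk_eq_eRk_s7 hA).symm)

lemma mDelta_union_eq_of_subset_closure (hA : A.Finite) (hCfin : C.Finite)
    (hC : C ⊆ (M.closure A ∩ P) \ A) :
    mDelta M P α (A ∪ C) = mDelta M P α A - α * C.ncard := by
  have hCP : C ⊆ P := fun x hx => (hC hx).1.2
  have hcolored : ((A ∪ C) ∩ P).ncard = (A ∩ P).ncard + C.ncard := by
    rw [union_inter_distrib_right, inter_eq_self_of_subset_left hCP]
    exact ncard_union_eq (disjoint_right.mpr fun x hx hxA => (hC hx).2 hxA.1)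
      (hA.subset inter_subset_left) hCfin
  rw [mDelta, mDelta, hcolored,
    mRk_union_eq_of_subset_closure (M.isRkFinite_of_finite hA) fun x hx => (hC hx).1.1]
  push_cast
  ring

lemma mDelta_le_ncard (hα : 0 ≤ α) (hA : A.Finite) : mDelta M P α A ≤ A.ncard := by
  have hrk : (mRk M A : ℝ) ≤ A.ncard := by exact_mod_cast mRk_le_ncard_s7 hA
  have hcolored : 0 ≤ α * ((A ∩ P).ncard : ℝ) := by positivity
  rw [mDelta]
  linarith

end

theorem bicolored_colored_algebraic_bound_general {V : Type*} (M : Matroid V) (P : Set V) (α : ℝ)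
    (hα : 0 < α) (A : Set V) (hAfin : A.Finite)
    (C : Set V) (hCfin : C.Finite) (hC : C ⊆ (M.closure A ∩ P) \ A)
    (hdelta : 0 ≤ mDelta M P α (A ∪ C)) :
    α * (C.ncard : ℝ) ≤ mDelta M P α A ∧ (C.ncard : ℝ) ≤ (A.ncard : ℝ) / α := by
  rw [mDelta_union_eq_of_subset_closure hAfin hCfin hC] at hdelta
  have hbound : α * (C.ncard : ℝ) ≤ mDelta M P α A := by linarith
  refine ⟨hbound, ?_⟩
  rw [le_div_iff₀ hα, mul_comm]
  exact hbound.trans (mDelta_le_ncard hα.le hAfin)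

/-- If `α > 0`, `A` is a finite subset of the ground set and `C` is a finite set of colored
elements of the closure of `A` lying outside `A` with `δ(A ∪ C) ≥ 0`, then `α·|C| ≤ δ(A)`;
in particular `|C| ≤ |A|/α`. -/
theorem bicolored_colored_algebraic_bound {V : Type*} (M : Matroid V) (P : Set V) (α : ℝ)
    (hα : 0 < α) (A : Set V) (hA : A ⊆ M.E) (hAfin : A.Finite)
    (C : Set V) (hCfin : C.Finite) (hC : C ⊆ (M.closure A ∩ P) \ A)
    (hdelta : 0 ≤ mDelta M P α (A ∪ C)) :
    α * (C.ncard : ℝ) ≤ mDelta M P α A ∧ (C.ncard : ℝ) ≤ (A.ncard : ℝ) / α :=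
  bicolored_colored_algebraic_bound_general M P α hα A hAfin C hCfin hC hdelta
end

section
/- Assume α > 0, let X ⊆ Z ⊆ M.E, and suppose X is closed in Z (X ≤ Z). Then: (1) no element of (M.closure X ∩ Z) \ X lies in P (every element of Z that is in the closure of X but not in X is uncolored); and (2) M.closure X ∩ Z is closed in Z. -/
open Set

/-- The relative rank `relRank(X, X ∪ A)` of a finite set `A` over a set `X`: the least
cardinality of a subset `A₀` of `A` with `A ⊆ closure (X ∪ A₀)`. -/
noncomputable def mRelRk {V : Type*} (M : Matroid V) (X A : Set V) : ℕ :=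
  sInf {n : ℕ | ∃ A₀ : Set V, A₀ ⊆ A ∧ A₀.ncard = n ∧ A ⊆ M.closure (X ∪ A₀)}

/-- The relative predimension `δ(A/X) = relRank(X, X ∪ A) - α·|(A ∩ P) \ X|` of a finite set
`A` over a set `X`, where `P` is the set of colored elements. -/
noncomputable def mDeltaRel {V : Type*} (M : Matroid V) (P : Set V) (α : ℝ)
    (A X : Set V) : ℝ :=
  (mRelRk M X A : ℝ) - α * (((A ∩ P) \ X).ncard : ℝ)

/-- `X` is closed (self-sufficient) in `Y`, written `X ≤ Y`: `X ⊆ Y` and `δ(A/X) ≥ 0` for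
every finite `A ⊆ Y`. -/
def SelfSuffIn {V : Type*} (M : Matroid V) (P : Set V) (α : ℝ) (X Y : Set V) : Prop :=
  X ⊆ Y ∧ ∀ A : Set V, A ⊆ Y → A.Finite → 0 ≤ mDeltaRel M P α A X

/-- If `α > 0`, `X ⊆ Z ⊆ M.E` and `X` is closed in `Z`, then every element of
`(closure X ∩ Z) \ X` is uncolored, and `closure X ∩ Z` is closed in `Z`. -/
theorem bicolored_closure_of_closed {V : Type*} (M : Matroid V) (P : Set V) (α : ℝ)
    (hα : 0 < α) (X Z : Set V) (hXZ : X ⊆ Z) (hZ : Z ⊆ M.E)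
    (h : SelfSuffIn M P α X Z) :
    (∀ x ∈ (M.closure X ∩ Z) \ X, x ∉ P) ∧
    SelfSuffIn M P α (M.closure X ∩ Z) Z := by
  obtain ⟨hXZ', hδ⟩ := h
  have hXE : X ⊆ M.E := hXZ.trans hZ
  have hXcl : X ⊆ M.closure X := M.subset_closure X hXE
  have hXY : X ⊆ M.closure X ∩ Z := subset_inter hXcl hXZ
  have h1 : ∀ x ∈ (M.closure X ∩ Z) \ X, x ∉ P := by
    rintro x ⟨⟨hxc, hxZ⟩, hxX⟩ hxP
    have h0 : mRelRk M X {x} = 0 := by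
      apply Nat.sInf_eq_zero.2
      left
      exact ⟨∅, empty_subset _, ncard_empty _, by
        simpa using hxc⟩
    have hd := hδ {x} (by simpa using hxZ) (finite_singleton x)
    rw [mDeltaRel, h0] at hd
    have hs : ({x} ∩ P) \ X = {x} := by
      ext y
      simp only [mem_diff, mem_inter_iff, mem_singleton_iff]
      constructor
      · rintro ⟨⟨hy, _⟩, _⟩; exact hy
      · rintro rfl; exact ⟨⟨rfl, hxP⟩, hxX⟩
    rw [hs, ncard_singleton] at hd
    simp only [Nat.cast_zero, Nat.cast_one, mul_one] at hd
    linarith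
  refine ⟨h1, inter_subset_right, ?_⟩
  intro A hAZ hAfin
  have hcl : M.closure (M.closure X ∩ Z) = M.closure X := by
    apply subset_antisymm
    · have := M.closure_subset_closure (inter_subset_left : M.closure X ∩ Z ⊆ M.closure X)
      rwa [M.closure_closure] at this
    · exact M.closure_subset_closure hXY
  have hcl2 : ∀ A₀ : Set V, M.closure (M.closure X ∩ Z ∪ A₀) = M.closure (X ∪ A₀) := by
    intro A₀
    rw [← M.closure_union_closure_left_eq, hcl, M.closure_union_closure_left_eq]
  have heq : mRelRk M (M.closure X ∩ Z) A = mRelRk M X A := by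
    unfold mRelRk
    congr 1
    ext n
    constructor
    · rintro ⟨A₀, hA₀, hn, hsub⟩
      exact ⟨A₀, hA₀, hn, by rwa [hcl2] at hsub⟩
    · rintro ⟨A₀, hA₀, hn, hsub⟩
      exact ⟨A₀, hA₀, hn, by rwa [hcl2]⟩
  have hd := hδ A hAZ hAfin
  rw [mDeltaRel] at hd ⊢
  rw [heq]
  have hsub : (A ∩ P) \ (M.closure X ∩ Z) ⊆ (A ∩ P) \ X := diff_subset_diff_right hXY
  have hfin : ((A ∩ P) \ X).Finite := hAfin.subset (diff_subset.trans inter_subset_left)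
  have hle : ((A ∩ P) \ (M.closure X ∩ Z)).ncard ≤ ((A ∩ P) \ X).ncard :=
    ncard_le_ncard hsub hfin
  have := mul_le_mul_of_nonneg_left (Nat.cast_le.2 hle : (((A ∩ P) \ (M.closure X ∩ Z)).ncard : ℝ) ≤ _) hα.le
  linarith
end

section
/- Let X ⊆ Y ⊆ Z ⊆ M.E. If X is closed in Y (X ≤ Y) and Y is closed in Z (Y ≤ Z), then X is closed in Z (X ≤ Z). -/
open Set

/-! The relative rank `mRelRk M X A` of a finite `A` is the rank of `A` in the contraction
`M ／ X`, so any basis of `A` in `M ／ X` computes it. Extending a basis of `B ⊆ A` to one of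
`A` shows that relative rank is superadditive along `X ⊆ X ∪ B ⊆ X ∪ A`, while the count of
colored elements is exactly additive. Hence `δ(A ∩ Y / X) + δ(A / Y) ≤ δ(A / X)` for `X ⊆ Y`,
and both summands on the left are nonnegative when `X ≤ Y ≤ Z` and `A ⊆ Z`. -/

namespace Matroid

variable {V : Type*} {M : Matroid V} {X A A₀ I : Set V}

lemma eRk_contract_le_encard_of_subset_closure (hA : A ⊆ M.closure (X ∪ A₀)) :
    (M ／ X).eRk A ≤ A₀.encard := by
  have hAcl : A ∩ (M ／ X).E ⊆ (M ／ X).closure A₀ := by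
    rw [contract_closure_eq, union_comm]
    exact fun a ⟨haA, haE⟩ ↦ ⟨hA haA, haE.2⟩
  calc (M ／ X).eRk A = (M ／ X).eRk (A ∩ (M ／ X).E) := (eRk_inter_ground _ _).symm
    _ ≤ (M ／ X).eRk ((M ／ X).closure A₀) := eRk_mono _ hAcl
    _ = (M ／ X).eRk A₀ := eRk_closure_eq _ _
    _ ≤ A₀.encard := eRk_le_encard _ _

lemma IsBasis'.subset_closure_union_of_contract (hI : (M ／ X).IsBasis' I A) (hA : A ⊆ M.E) :
    A ⊆ M.closure (X ∪ I) := by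
  intro a haA
  by_cases haX : a ∈ X
  · exact M.mem_closure_of_mem' (.inl haX) (hA haA)
  · have ha : a ∈ (M ／ X).closure I := by
      rw [hI.closure_eq_closure]
      exact mem_closure_of_mem' _ haA ⟨hA haA, haX⟩
    rw [contract_closure_eq, union_comm] at ha
    exact ha.1

end Matroid

open Matroid

section RelRank

variable {V : Type*} {M : Matroid V} {X X' A B I : Set V}

lemma mRelRk_le_ncard (hBA : B ⊆ A) (hA : A ⊆ M.closure (X ∪ B)) : mRelRk M X A ≤ B.ncard :=
  Nat.sInf_le ⟨B, hBA, rfl, hA⟩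

lemma mRelRk_eq_ncard_of_isBasis' (hA : A ⊆ M.E) (hAfin : A.Finite)
    (hI : (M ／ X).IsBasis' I A) : mRelRk M X A = I.ncard := by
  refine le_antisymm (mRelRk_le_ncard hI.subset (hI.subset_closure_union_of_contract hA)) ?_
  refine le_csInf ⟨_, I, hI.subset, rfl, hI.subset_closure_union_of_contract hA⟩ ?_
  rintro _ ⟨A₀, hA₀A, rfl, hA₀⟩
  have hle : I.encard ≤ A₀.encard :=
    hI.encard_eq_eRk ▸ eRk_contract_le_encard_of_subset_closure hA₀
  rwa [← (hAfin.subset hI.subset).cast_ncard_eq, ← (hAfin.subset hA₀A).cast_ncard_eq,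
    Nat.cast_le] at hle

lemma mRelRk_anti_left (hA : A ⊆ M.E) (hAfin : A.Finite) (hXX' : X ⊆ X') :
    mRelRk M X' A ≤ mRelRk M X A := by
  obtain ⟨I, hI⟩ := (M ／ X).exists_isBasis' A
  rw [mRelRk_eq_ncard_of_isBasis' hA hAfin hI]
  exact mRelRk_le_ncard hI.subset
    ((hI.subset_closure_union_of_contract hA).trans (M.closure_subset_closure (by tauto_set)))

lemma mRelRk_add_mRelRk_union_le (hA : A ⊆ M.E) (hAfin : A.Finite) (hBA : B ⊆ A) :
    mRelRk M X B + mRelRk M (X ∪ B) A ≤ mRelRk M X A := by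
  obtain ⟨I, hI⟩ := (M ／ X).exists_isBasis' B
  obtain ⟨J, hJ, hIJ⟩ := hI.indep.subset_isBasis'_of_subset (hI.subset.trans hBA)
  have hJspan : A ⊆ M.closure ((X ∪ B) ∪ (J \ I)) :=
    (hJ.subset_closure_union_of_contract hA).trans
      (M.closure_subset_closure (by have := hI.subset; tauto_set))
  rw [mRelRk_eq_ncard_of_isBasis' (hBA.trans hA) (hAfin.subset hBA) hI,
    mRelRk_eq_ncard_of_isBasis' hA hAfin hJ,
    ← ncard_sdiff_add_ncard_of_subset hIJ (hAfin.subset hJ.subset), add_comm (J \ I).ncard]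
  exact Nat.add_le_add_left (mRelRk_le_ncard (sdiff_subset.trans hJ.subset) hJspan) _

end RelRank

lemma ncard_inter_sdiff_add_ncard_sdiff {V : Type*} {S X Y : Set V} (hS : S.Finite)
    (hXY : X ⊆ Y) : ((S ∩ Y) \ X).ncard + (S \ Y).ncard = (S \ X).ncard := by
  rw [← ncard_inter_add_ncard_sdiff_eq_ncard (S \ X) Y hS.sdiff]
  congr 2 <;> tauto_set

lemma mDeltaRel_inter_add_mDeltaRel_le {V : Type*} {M : Matroid V} {P : Set V} {α : ℝ}
    {X Y A : Set V} (hA : A ⊆ M.E) (hAfin : A.Finite) (hXY : X ⊆ Y) :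
    mDeltaRel M P α (A ∩ Y) X + mDeltaRel M P α A Y ≤ mDeltaRel M P α A X := by
  have hrank : mRelRk M X (A ∩ Y) + mRelRk M Y A ≤ mRelRk M X A :=
    calc mRelRk M X (A ∩ Y) + mRelRk M Y A
        ≤ mRelRk M X (A ∩ Y) + mRelRk M (X ∪ (A ∩ Y)) A :=
          Nat.add_le_add_left (mRelRk_anti_left hA hAfin (union_subset hXY inter_subset_right)) _
      _ ≤ mRelRk M X A := mRelRk_add_mRelRk_union_le hA hAfin inter_subset_left
  have hcolored :
      (((A ∩ Y) ∩ P) \ X).ncard + ((A ∩ P) \ Y).ncard = ((A ∩ P) \ X).ncard := by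
    rw [inter_right_comm]
    exact ncard_inter_sdiff_add_ncard_sdiff (hAfin.subset inter_subset_left) hXY
  have hrank_real := (Nat.cast_le (α := ℝ)).2 hrank
  push_cast at hrank_real
  simp only [mDeltaRel, ← hcolored, Nat.cast_add]
  linarith

theorem bicolored_selfSuff_trans_general {V : Type*} (M : Matroid V) (P : Set V) (α : ℝ)
    (X Y Z : Set V) (hZ : Z ⊆ M.E)
    (h1 : SelfSuffIn M P α X Y) (h2 : SelfSuffIn M P α Y Z) :
    SelfSuffIn M P α X Z := by
  refine ⟨h1.1.trans h2.1, fun A hAZ hAfin => ?_⟩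
  have hδX := h1.2 (A ∩ Y) inter_subset_right (hAfin.subset inter_subset_left)
  have hδY := h2.2 A hAZ hAfin
  linarith [mDeltaRel_inter_add_mDeltaRel_le (P := P) (α := α) (hAZ.trans hZ) hAfin h1.1]

/-- Transitivity of closedness: if `X ⊆ Y ⊆ Z ⊆ M.E`, `X` is closed in `Y` and `Y` is closed
in `Z`, then `X` is closed in `Z`. -/
theorem bicolored_selfSuff_trans {V : Type*} (M : Matroid V) (P : Set V) (α : ℝ)
    (X Y Z : Set V) (hXY : X ⊆ Y) (hYZ : Y ⊆ Z) (hZ : Z ⊆ M.E)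
    (h1 : SelfSuffIn M P α X Y) (h2 : SelfSuffIn M P α Y Z) :
    SelfSuffIn M P α X Z :=
  bicolored_selfSuff_trans_general M P α X Y Z hZ h1 h2
end

section
/- Let X ⊆ Z ⊆ M.E and W ⊆ Z. If X is closed in Z (X ≤ Z), then X ∩ W is closed in W (X ∩ W ≤ W). -/
open Set

/-- If `X ⊆ Z ⊆ M.E`, `W ⊆ Z` and `X` is closed in `Z`, then `X ∩ W` is closed in `W`. -/
theorem bicolored_selfSuff_inter_subset {V : Type*} (M : Matroid V) (P : Set V) (α : ℝ)
    (X Z W : Set V) (hXZ : X ⊆ Z) (hZ : Z ⊆ M.E) (hW : W ⊆ Z)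
    (h : SelfSuffIn M P α X Z) :
    SelfSuffIn M P α (X ∩ W) W := by
  refine ⟨inter_subset_right, fun A hAW hAfin => ?_⟩
  have hAZ : A ⊆ Z := hAW.trans hW
  have hδ := h.2 A hAZ hAfin
  have hcount : ((A ∩ P) \ (X ∩ W)) = ((A ∩ P) \ X) := by
    ext a
    simp only [mem_diff, mem_inter_iff]
    exact ⟨fun ⟨h1, h2⟩ => ⟨h1, fun hx => h2 ⟨hx, hAW h1.1⟩⟩,
      fun ⟨h1, h2⟩ => ⟨h1, fun hx => h2 hx.1⟩⟩
  have hrk : mRelRk M X A ≤ mRelRk M (X ∩ W) A := by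
    unfold mRelRk
    have hne : {n : ℕ | ∃ A₀ : Set V, A₀ ⊆ A ∧ A₀.ncard = n ∧
        A ⊆ M.closure ((X ∩ W) ∪ A₀)}.Nonempty := by
      refine ⟨A.ncard, A, Subset.rfl, rfl, ?_⟩
      intro a ha
      exact M.mem_closure_of_mem' (Or.inr ha) (hZ (hAZ ha))
    obtain ⟨A₀, hA₀A, hcard, hcl⟩ := Nat.sInf_mem hne
    exact Nat.sInf_le ⟨A₀, hA₀A, hcard,
      hcl.trans (M.closure_subset_closure (union_subset_union_left A₀ inter_subset_left))⟩
  have : mDeltaRel M P α A X ≤ mDeltaRel M P α A (X ∩ W) := by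
    unfold mDeltaRel
    rw [hcount]
    have : (mRelRk M X A : ℝ) ≤ (mRelRk M (X ∩ W) A : ℝ) := Nat.cast_le.mpr hrk
    linarith
  linarith
end

section
/- Let A ⊆ B be finite subsets of M.E with A ≠ B, and suppose B is an intrinsic extension of A, i.e. there is no set A' ≠ B with A ⊆ A' ⊆ B such that A' is closed in B. Then there exists a chain A = B₀ ⊊ B₁ ⊊ … ⊊ B_r = B such that each pair (B_i, B_{i+1}) is minimal, i.e. δ(B_{i+1}) < δ(B_i) while δ(C) ≥ δ(B_i) for every C with B_i ⊆ C ⊊ B_{i+1}. -/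
open Set

/-- If `B` is an intrinsic extension of `A` (there is no `A' ≠ B` with `A ⊆ A' ⊆ B` closed
in `B`) with `A ≠ B`, then there is a chain `A = B₀ ⊊ B₁ ⊊ ⋯ ⊊ B_r = B` in which each
consecutive pair is minimal: `δ(B_{i+1}) < δ(B_i)` while `δ(C) ≥ δ(B_i)` for every
`C` with `B_i ⊆ C ⊊ B_{i+1}`. -/
theorem bicolored_intrinsic_tower_of_minimal_pairs {V : Type*} (M : Matroid V) (P : Set V)
    (α : ℝ) (A B : Set V) (hAB : A ⊆ B) (hne : A ≠ B) (hB : B ⊆ M.E) (hBfin : B.Finite)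
    (hint : ¬ ∃ A' : Set V, A' ≠ B ∧ A ⊆ A' ∧ A' ⊆ B ∧
      ∀ C : Set V, A' ⊆ C → C ⊆ B → mDelta M P α A' ≤ mDelta M P α C) :
    ∃ (r : ℕ) (Bs : ℕ → Set V), Bs 0 = A ∧ Bs r = B ∧
      ∀ i < r, Bs i ⊂ Bs (i + 1) ∧
        mDelta M P α (Bs (i + 1)) < mDelta M P α (Bs i) ∧
        ∀ C : Set V, Bs i ⊆ C → C ⊂ Bs (i + 1) → mDelta M P α (Bs i) ≤ mDelta M P α C := by
  classical
  have key : ∀ n : ℕ, ∀ A' : Set V, A ⊆ A' → A' ⊆ B → (B \ A').ncard ≤ n →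
      ∃ (r : ℕ) (Bs : ℕ → Set V), Bs 0 = A' ∧ Bs r = B ∧
        ∀ i < r, Bs i ⊂ Bs (i + 1) ∧
          mDelta M P α (Bs (i + 1)) < mDelta M P α (Bs i) ∧
          ∀ C : Set V, Bs i ⊆ C → C ⊂ Bs (i + 1) →
            mDelta M P α (Bs i) ≤ mDelta M P α C := by
    intro n
    induction n with
    | zero =>
      intro A' hA hA'B hcard
      have hfin : (B \ A').Finite := hBfin.subset diff_subset
      have hempty : B \ A' = ∅ := by
        have := Set.ncard_eq_zero hfin
        rw [← this]
        omega
      have hEq : A' = B := Set.Subset.antisymm hA'B (fun x hx => by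
        by_contra hxn
        have : x ∈ B \ A' := ⟨hx, hxn⟩
        rw [hempty] at this
        exact this)
      exact ⟨0, fun _ => B, by rw [hEq], rfl, by omega⟩
    | succ n ih =>
      intro A' hA hA'B hcard
      by_cases hEq : A' = B
      · exact ⟨0, fun _ => B, by rw [hEq], rfl, by omega⟩
      · have hnot : ¬ ∀ C : Set V, A' ⊆ C → C ⊆ B → mDelta M P α A' ≤ mDelta M P α C :=
          fun h => hint ⟨A', hEq, hA, hA'B, h⟩
        push_neg at hnot
        obtain ⟨C, hC1, hC2, hC3⟩ := hnot
        set S : Set ℕ := {m | ∃ D : Set V, A' ⊆ D ∧ D ⊆ B ∧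
          mDelta M P α D < mDelta M P α A' ∧ D.ncard = m} with hSdef
        have hS : S.Nonempty := ⟨C.ncard, C, hC1, hC2, hC3, rfl⟩
        obtain ⟨C₀, hC01, hC02, hC03, hC04⟩ := Nat.sInf_mem hS
        have hC0fin : C₀.Finite := hBfin.subset hC02
        have hssub : A' ⊂ C₀ :=
          hC01.ssubset_of_ne (fun h => by rw [h] at hC03; exact lt_irrefl _ hC03)
        -- minimality of C₀
        have hminC : ∀ C' : Set V, A' ⊆ C' → C' ⊂ C₀ →
            mDelta M P α A' ≤ mDelta M P α C' := by
          intro C' h1 h2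
          by_contra hlt
          push_neg at hlt
          have hmem : C'.ncard ∈ S := ⟨C', h1, h2.subset.trans hC02, hlt, rfl⟩
          have hle : sInf S ≤ C'.ncard := Nat.sInf_le hmem
          have hlt' : C'.ncard < C₀.ncard := Set.ncard_lt_ncard h2 hC0fin
          omega
        -- cardinality decreases
        have hcard' : (B \ C₀).ncard ≤ n := by
          have hss : B \ C₀ ⊂ B \ A' := by
            constructor
            · exact diff_subset_diff_right hssub.subset
            · intro hsub
              obtain ⟨x, hxC, hxA⟩ := exists_of_ssubset hssub
              have hxB : x ∈ B := hC02 hxC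
              have : x ∈ B \ C₀ := hsub ⟨hxB, hxA⟩
              exact this.2 hxC
          have := Set.ncard_lt_ncard hss (hBfin.subset diff_subset)
          omega
        obtain ⟨r, Bs, h0, hr, hmin⟩ := ih C₀ (hA.trans hssub.subset) hC02 hcard'
        refine ⟨r + 1, fun i => if i = 0 then A' else Bs (i - 1), by simp, by simp [hr], ?_⟩
        intro i hi
        match i with
        | 0 =>
          simp only [if_pos rfl, if_neg (Nat.one_ne_zero), Nat.sub_self]
          refine ⟨by rw [h0]; exact hssub, by rw [h0]; exact hC03, ?_⟩
          intro C' h1 h2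
          rw [h0] at h2
          exact hminC C' h1 h2
        | j + 1 =>
          simp only [if_neg (Nat.succ_ne_zero j), Nat.add_sub_cancel]
          have := hmin j (by omega)
          simpa using this
  obtain ⟨r, Bs, h0, hr, hmin⟩ := key (B \ A).ncard A subset_rfl hAB le_rfl
  exact ⟨r, Bs, h0, hr, hmin⟩
end
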